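/- Let L : ℝ^d → ℝ be differentiable, L∞-smooth with respect to the ℓ∞ norm, bounded below with infimum L*, and μ∞-strongly convex in the ℓ1-gradient-dominance sense: 2·μ∞·(L(x) − L*) ≤ ‖∇L(x)‖₁² for all x, with μ∞ > 0. Let θ ∈ (0,1). On a probability space, let (x_k) be random vectors with x_0 deterministic and x_{k+1} = x_k − η_k·sign(g_k) with η_k = (1 − θ)·‖∇L(x_k)‖₁ / L∞, where each g_k is integrable, conditionally unbiased E[g_k ∣ x_0, …, x_k] = ∇L(x_k), and satisfies E[‖g_k − ∇L(x_k)‖₁ ∣ x_0, …, x_k] ≤ θ·‖∇L(x_k)‖₁ almost surely. Then for every k, E[L(x_{k+1})] − L* ≤ (1 − (1 − θ)²·μ∞/L∞) · (E[L(x_k)] − L*). -/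

import Mathlib

open MeasureTheory

/-- The ℓ1 norm on `ℝ^d`. -/
def l1norm {d : ℕ} (v : EuclideanSpace ℝ (Fin d)) : ℝ := ∑ i, |v i|

/-- The ℓ∞ norm on `ℝ^d`. -/
noncomputable def linfnorm {d : ℕ} (v : EuclideanSpace ℝ (Fin d)) : ℝ := ⨆ i, |v i|

/-- The coordinatewise sign map on `ℝ^d`. -/
noncomputable def signVec {d : ℕ} (v : EuclideanSpace ℝ (Fin d)) : EuclideanSpace ℝ (Fin d) :=
  WithLp.toLp 2 (fun i => Real.sign (v i))

/-- The σ-algebra generated by the random vectors `x 0, …, x k`. -/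
def genBy {Ω : Type*} {d : ℕ} (x : ℕ → Ω → EuclideanSpace ℝ (Fin d)) (k : ℕ) :
    MeasurableSpace Ω :=
  ⨆ i ∈ Finset.range (k + 1), MeasurableSpace.comap (x i) inferInstance

/-!
The ℓ∞-smoothness gives the descent inequality `L (p + v) ≤ L p + ⟪∇L p, v⟫ + Linf / 2 * ‖v‖∞²`,
and for `v = -η • sign g` the coordinatewise bound `∇ᵢ sign gᵢ ≥ |gᵢ| - |gᵢ - ∇ᵢ|` makes the
linear term at most `η (‖g - ∇L‖₁ - ‖g‖₁)`. Given `x₀, …, x_k` the step `η` is known, conditional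
Jensen and unbiasedness give `E[‖g‖₁ | …] ≥ ‖∇L‖₁`, and the noise condition gives
`E[‖g - ∇L‖₁ | …] ≤ θ ‖∇L‖₁`. So the expected decrease is at least
`(1 - θ) η ‖∇L‖₁ - Linf η² / 2 = (1 - θ)² ‖∇L‖₁² / (2 Linf)`, which gradient dominance turns into
the linear rate. All the integrals are finite because the iterates stay in a fixed ball: each step
is bounded by a continuous function of the current point.
-/

open Set
open scoped RealInnerProductSpace

def LinfSmooth {d : ℕ} (L : EuclideanSpace ℝ (Fin d) → ℝ) (Linf : ℝ) : Prop :=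
  ∀ x y, l1norm (gradient L x - gradient L y) ≤ Linf * linfnorm (x - y)

lemma Real.abs_sign_le_one (t : ℝ) : |Real.sign t| ≤ 1 := by
  rcases Real.sign_apply_eq t with h | h | h <;> simp [h]

section Norms

variable {d : ℕ}

lemma l1norm_nonneg (v : EuclideanSpace ℝ (Fin d)) : 0 ≤ l1norm v :=
  Finset.sum_nonneg fun _ _ => abs_nonneg _

lemma linfnorm_nonneg (v : EuclideanSpace ℝ (Fin d)) : 0 ≤ linfnorm v :=
  Real.iSup_nonneg fun _ => abs_nonneg _

lemma abs_le_linfnorm (v : EuclideanSpace ℝ (Fin d)) (i : Fin d) : |v i| ≤ linfnorm v :=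
  le_ciSup (f := fun j => |v j|) (finite_range _).bddAbove i

lemma l1norm_smul (c : ℝ) (v : EuclideanSpace ℝ (Fin d)) : l1norm (c • v) = |c| * l1norm v := by
  simp only [l1norm, PiLp.smul_apply, smul_eq_mul, abs_mul, Finset.mul_sum]

lemma linfnorm_smul (c : ℝ) (v : EuclideanSpace ℝ (Fin d)) :
    linfnorm (c • v) = |c| * linfnorm v := by
  simp only [linfnorm, PiLp.smul_apply, smul_eq_mul, abs_mul]
  exact (Real.mul_iSup_of_nonneg (abs_nonneg c) _).symm

lemma l1norm_add_le (u v : EuclideanSpace ℝ (Fin d)) : l1norm (u + v) ≤ l1norm u + l1norm v := by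
  simp only [l1norm, PiLp.add_apply, ← Finset.sum_add_distrib]
  exact Finset.sum_le_sum fun i _ => abs_add_le _ _

lemma convexOn_l1norm : ConvexOn ℝ univ (l1norm (d := d)) := by
  refine ⟨convex_univ, fun u _ v _ a b ha hb _ => ?_⟩
  calc l1norm (a • u + b • v) ≤ l1norm (a • u) + l1norm (b • v) := l1norm_add_le _ _
    _ = a * l1norm u + b * l1norm v := by
        rw [l1norm_smul, l1norm_smul, abs_of_nonneg ha, abs_of_nonneg hb]

lemma continuous_l1norm : Continuous (l1norm (d := d)) :=
  continuousOn_univ.1 (convexOn_l1norm.continuousOn isOpen_univ)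

lemma norm_le_l1norm (v : EuclideanSpace ℝ (Fin d)) : ‖v‖ ≤ l1norm v := by
  rw [EuclideanSpace.norm_eq, Real.sqrt_le_left (l1norm_nonneg v), l1norm]
  simpa only [Real.norm_eq_abs] using
    Finset.sum_sq_le_sq_sum_of_nonneg (s := Finset.univ) fun i _ => abs_nonneg (v i)

lemma linfnorm_le_norm (v : EuclideanSpace ℝ (Fin d)) : linfnorm v ≤ ‖v‖ :=
  Real.iSup_le (fun i => PiLp.norm_apply_le v i) (norm_nonneg v)

lemma l1norm_signVec_le (v : EuclideanSpace ℝ (Fin d)) : l1norm (signVec v) ≤ d := by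
  simpa [l1norm, signVec] using
    Finset.sum_le_sum fun i (_ : i ∈ Finset.univ) => Real.abs_sign_le_one (v i)

lemma linfnorm_signVec_le (v : EuclideanSpace ℝ (Fin d)) : linfnorm (signVec v) ≤ 1 :=
  Real.iSup_le (fun i => Real.abs_sign_le_one (v i)) zero_le_one

lemma abs_inner_le_l1norm_mul_linfnorm (u v : EuclideanSpace ℝ (Fin d)) :
    |⟪u, v⟫| ≤ l1norm u * linfnorm v := by
  simp only [PiLp.inner_apply, RCLike.inner_apply, Real.ringHom_apply, l1norm, Finset.sum_mul]
  refine (Finset.abs_sum_le_sum_abs _ _).trans (Finset.sum_le_sum fun i _ => ?_)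
  rw [abs_mul, mul_comm]
  exact mul_le_mul_of_nonneg_left (abs_le_linfnorm v i) (abs_nonneg _)

lemma l1norm_sub_l1norm_sub_le_inner_signVec (u w : EuclideanSpace ℝ (Fin d)) :
    l1norm w - l1norm (w - u) ≤ ⟪u, signVec w⟫ := by
  simp only [PiLp.inner_apply, RCLike.inner_apply, Real.ringHom_apply, l1norm, signVec,
    PiLp.sub_apply, ← Finset.sum_sub_distrib]
  refine Finset.sum_le_sum fun i _ => ?_
  rcases lt_trichotomy (w i) 0 with h | h | h
  · rw [Real.sign_of_neg h, abs_of_neg h]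
    linarith [neg_abs_le (w i - u i)]
  · simp [h]
  · rw [Real.sign_of_pos h, abs_of_pos h]
    linarith [le_abs_self (w i - u i)]

end Norms

lemma le_add_deriv_add_half_of_deriv_sub_le {f f' : ℝ → ℝ} {C : ℝ}
    (hf : ∀ t, HasDerivAt f (f' t) t) (hC : ∀ t ∈ Ioo (0 : ℝ) 1, f' t - f' 0 ≤ C * t) :
    f 1 ≤ f 0 + f' 0 + C / 2 := by
  set ψ : ℝ → ℝ := fun t => f t - t * f' 0 - C / 2 * t ^ 2
  have hψ : ∀ t, HasDerivAt ψ (f' t - f' 0 - C * t) t := fun t => by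
    refine (((hf t).sub ((hasDerivAt_id' t).mul_const (f' 0))).sub
      ((hasDerivAt_pow 2 t).const_mul (C / 2))).congr_deriv ?_
    ring
  have hanti : AntitoneOn ψ (Icc 0 1) := by
    refine antitoneOn_of_deriv_nonpos (convex_Icc 0 1)
      (HasDerivAt.continuousOn fun t _ => hψ t)
      (fun t _ => (hψ t).differentiableAt.differentiableWithinAt) fun t ht => ?_
    rw [interior_Icc] at ht
    rw [(hψ t).deriv]
    linarith [hC t ht]
  have := hanti (left_mem_Icc.2 zero_le_one) (right_mem_Icc.2 zero_le_one) zero_le_one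
  simp only [ψ] at this
  linarith

lemma hasDerivAt_comp_add_smul {F : Type*} [NormedAddCommGroup F] [InnerProductSpace ℝ F]
    [CompleteSpace F] {L : F → ℝ} (p v : F) (t : ℝ) (hL : DifferentiableAt ℝ L (p + t • v)) :
    HasDerivAt (fun s : ℝ => L (p + s • v)) ⟪gradient L (p + t • v), v⟫ t := by
  have hline : HasDerivAt (fun s : ℝ => p + s • v) v t := by
    simpa using ((hasDerivAt_id t).smul_const v).const_add p
  exact hL.hasGradientAt.hasFDerivAt.comp_hasDerivAt t hline

section Smooth

variable {d : ℕ} {L : EuclideanSpace ℝ (Fin d) → ℝ} {Linf : ℝ}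

lemma le_add_inner_add_linfnorm_sq (hL : Differentiable ℝ L)
    (hsmooth : LinfSmooth L Linf)
    (p v : EuclideanSpace ℝ (Fin d)) :
    L (p + v) ≤ L p + ⟪gradient L p, v⟫ + Linf / 2 * linfnorm v ^ 2 := by
  have key := le_add_deriv_add_half_of_deriv_sub_le (C := Linf * linfnorm v ^ 2)
    (fun t => hasDerivAt_comp_add_smul p v t (hL _)) fun t ht => ?_
  · simpa [mul_div_right_comm] using key
  calc ⟪gradient L (p + t • v), v⟫ - ⟪gradient L (p + (0 : ℝ) • v), v⟫
      = ⟪gradient L (p + t • v) - gradient L p, v⟫ := by rw [zero_smul, add_zero, inner_sub_left]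
    _ ≤ l1norm (gradient L (p + t • v) - gradient L p) * linfnorm v :=
        (le_abs_self _).trans (abs_inner_le_l1norm_mul_linfnorm _ _)
    _ ≤ Linf * linfnorm (t • v) * linfnorm v := by
        gcongr
        · exact linfnorm_nonneg v
        · simpa using hsmooth (p + t • v) p
    _ = Linf * linfnorm v ^ 2 * t := by
        rw [linfnorm_smul, abs_of_pos ht.1]; ring

lemma le_sub_smul_signVec (hL : Differentiable ℝ L) (hLinf : 0 ≤ Linf)
    (hsmooth : LinfSmooth L Linf)
    (p w : EuclideanSpace ℝ (Fin d)) {η : ℝ} (hη : 0 ≤ η) :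
    L (p - η • signVec w)
      ≤ L p + η * (l1norm (w - gradient L p) - l1norm w) + Linf / 2 * η ^ 2 := by
  have hinner : ⟪gradient L p, -η • signVec w⟫ ≤ η * (l1norm (w - gradient L p) - l1norm w) := by
    have hsign := l1norm_sub_l1norm_sub_le_inner_signVec (gradient L p) w
    rw [inner_smul_right]
    linarith [mul_le_mul_of_nonneg_left hsign hη]
  have hlinf : linfnorm (-η • signVec w) ≤ η := by
    rw [linfnorm_smul, abs_neg, abs_of_nonneg hη]
    exact mul_le_of_le_one_right hη (linfnorm_signVec_le w)
  calc L (p - η • signVec w) = L (p + -η • signVec w) := by rw [neg_smul, sub_eq_add_neg]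
    _ ≤ L p + ⟪gradient L p, -η • signVec w⟫ + Linf / 2 * linfnorm (-η • signVec w) ^ 2 :=
        le_add_inner_add_linfnorm_sq hL hsmooth p _
    _ ≤ L p + η * (l1norm (w - gradient L p) - l1norm w) + Linf / 2 * η ^ 2 := by
        gcongr
        exact linfnorm_nonneg _

lemma lipschitzWith_gradient
    (hsmooth : LinfSmooth L Linf) :
    LipschitzWith Linf.toNNReal (gradient L) := by
  refine LipschitzWith.of_dist_le_mul fun p q => ?_
  rw [dist_eq_norm, dist_eq_norm]
  calc ‖gradient L p - gradient L q‖ ≤ Linf * linfnorm (p - q) :=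
        (norm_le_l1norm _).trans (hsmooth p q)
    _ ≤ Linf.toNNReal * ‖p - q‖ :=
        mul_le_mul (Real.le_coe_toNNReal Linf) (linfnorm_le_norm _) (linfnorm_nonneg _)
          Linf.toNNReal.coe_nonneg

end Smooth

section Bounded

variable {Ω E F : Type*} [NormedAddCommGroup E] [ProperSpace E] [NormedAddCommGroup F]

lemma exists_norm_comp_le {f : E → F} (hf : Continuous f) {X : Ω → E} {R : ℝ}
    (hX : ∀ ω, ‖X ω‖ ≤ R) : ∃ C, ∀ ω, ‖f (X ω)‖ ≤ C := by
  obtain ⟨C, hC⟩ :=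
    (isCompact_closedBall (0 : E) R).exists_bound_of_continuousOn hf.continuousOn
  exact ⟨C, fun ω => hC _ (mem_closedBall_zero_iff.2 (hX ω))⟩

lemma integrable_comp_of_norm_le {mΩ : MeasurableSpace Ω} {μ : Measure Ω} [IsFiniteMeasure μ]
    {f : E → F} (hf : Continuous f) {X : Ω → E} (hXm : AEStronglyMeasurable X μ) {R : ℝ}
    (hX : ∀ ω, ‖X ω‖ ≤ R) : Integrable (fun ω => f (X ω)) μ := by
  obtain ⟨C, hC⟩ := exists_norm_comp_le hf hX
  exact .of_bound (hf.comp_aestronglyMeasurable hXm) C (ae_of_all _ hC)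

lemma exists_norm_le_of_eq_sub_smul [NormedSpace ℝ E] {φ : E → ℝ} (hφ : Continuous φ)
    {x s : ℕ → Ω → E} {B : ℝ} (hs : ∀ j ω, ‖s j ω‖ ≤ B) (hx0 : ∃ R, ∀ ω, ‖x 0 ω‖ ≤ R)
    (hx : ∀ j ω, x (j + 1) ω = x j ω - φ (x j ω) • s j ω) (j : ℕ) :
    ∃ R, ∀ ω, ‖x j ω‖ ≤ R := by
  induction j with
  | zero => exact hx0
  | succ j ih =>
    obtain ⟨R, hR⟩ := ih
    obtain ⟨C, hC⟩ := exists_norm_comp_le hφ hR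
    refine ⟨R + C * B, fun ω => ?_⟩
    rw [hx]
    calc ‖x j ω - φ (x j ω) • s j ω‖ ≤ ‖x j ω‖ + ‖φ (x j ω)‖ * ‖s j ω‖ := by
          rw [← norm_smul]; exact norm_sub_le _ _
      _ ≤ R + C * B := by
          gcongr
          · exact hR ω
          · exact (norm_nonneg _).trans (hC ω)
          · exact hC ω
          · exact hs j ω

end Bounded

section Expectation

variable {Ω : Type*} {m mΩ : MeasurableSpace Ω} {μ : Measure Ω} {d : ℕ}

lemma integral_mul_le_of_condExp_le [IsFiniteMeasure μ] (hm : m ≤ mΩ) {η f φ : Ω → ℝ} {C : ℝ}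
    (hη : StronglyMeasurable[m] η) (hη0 : ∀ ω, 0 ≤ η ω) (hηC : ∀ ω, ‖η ω‖ ≤ C)
    (hf : Integrable f μ) (hηφ : Integrable (fun ω => η ω * φ ω) μ) (hle : μ[f|m] ≤ᵐ[μ] φ) :
    ∫ ω, η ω * f ω ∂μ ≤ ∫ ω, η ω * φ ω ∂μ :=
  calc ∫ ω, η ω * f ω ∂μ = ∫ ω, (μ[η * f|m]) ω ∂μ := (integral_condExp hm).symm
    _ = ∫ ω, η ω * (μ[f|m]) ω ∂μ :=
        integral_congr_ae (condExp_stronglyMeasurable_mul_of_bound hm hη hf C (ae_of_all _ hηC))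
    _ ≤ ∫ ω, η ω * φ ω ∂μ :=
        integral_mono_ae
          (integrable_condExp.bdd_mul (hη.mono hm).aestronglyMeasurable (ae_of_all _ hηC)) hηφ
          (hle.mono fun ω h => mul_le_mul_of_nonneg_left h (hη0 ω))

lemma integrable_l1norm_comp {G : Ω → EuclideanSpace ℝ (Fin d)} (hG : Integrable G μ) :
    Integrable (fun ω => l1norm (G ω)) μ :=
  integrable_finsetSum _ fun i _ => ((EuclideanSpace.proj (𝕜 := ℝ) i).integrable_comp hG).abs

lemma condExp_l1norm_sub_sub_l1norm_le [IsFiniteMeasure μ] (hm : m ≤ mΩ) {θ : ℝ}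
    {G Y : Ω → EuclideanSpace ℝ (Fin d)} (hG : Integrable G μ) (hY : Integrable Y μ)
    (hunb : μ[G|m] =ᵐ[μ] Y)
    (hnoise : ∀ᵐ ω ∂μ, μ[fun ω' => l1norm (G ω' - Y ω')|m] ω ≤ θ * l1norm (Y ω)) :
    μ[fun ω => l1norm (G ω - Y ω) - l1norm (G ω)|m] ≤ᵐ[μ] fun ω => -(1 - θ) * l1norm (Y ω) := by
  have hGY : Integrable (fun ω => l1norm (G ω - Y ω)) μ := integrable_l1norm_comp (hG.sub hY)
  have hG1 : Integrable (fun ω => l1norm (G ω)) μ := integrable_l1norm_comp hG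
  have hjensen : (fun ω => l1norm (μ[G|m] ω)) ≤ᵐ[μ] μ[fun ω => l1norm (G ω)|m] :=
    convexOn_l1norm.map_condExp_le_of_finiteDimensional hm hG hG1
  filter_upwards [condExp_sub hGY hG1 m, hjensen, hunb, hnoise] with ω hsub hjensen hunb hnoise
  refine hsub.trans_le ?_
  rw [Pi.sub_apply]
  rw [hunb] at hjensen
  linarith

lemma mul_integral_sub_le_integral [IsProbabilityMeasure μ] {f g : Ω → ℝ} {a c : ℝ}
    (hf : Integrable f μ) (hg : Integrable g μ) (hfg : ∀ ω, c * (f ω - a) ≤ g ω) :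
    c * (∫ ω, f ω ∂μ - a) ≤ ∫ ω, g ω ∂μ :=
  calc c * (∫ ω, f ω ∂μ - a) = ∫ ω, c * (f ω - a) ∂μ := by
        rw [integral_const_mul, integral_sub hf (integrable_const a), integral_const,
          probReal_univ, one_smul]
    _ ≤ ∫ ω, g ω ∂μ := integral_mono ((hf.sub (integrable_const a)).const_mul c) hg hfg

end Expectation

noncomputable def stepSize {d : ℕ} (L : EuclideanSpace ℝ (Fin d) → ℝ) (Linf θ : ℝ)
    (p : EuclideanSpace ℝ (Fin d)) : ℝ :=
  (1 - θ) * l1norm (gradient L p) / Linf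

section SignStep

variable {d : ℕ} {L : EuclideanSpace ℝ (Fin d) → ℝ} {Linf θ : ℝ}

lemma continuous_stepSize (hsmooth : LinfSmooth L Linf) :
    Continuous (stepSize L Linf θ) :=
  ((continuous_l1norm.comp (lipschitzWith_gradient hsmooth).continuous).const_mul _).div_const _

variable {Ω : Type*} {m mΩ : MeasurableSpace Ω} {μ : Measure Ω}

lemma stepSize_mul_add_half_sq (hLinf : Linf ≠ 0) (p : EuclideanSpace ℝ (Fin d)) :
    stepSize L Linf θ p * (-(1 - θ) * l1norm (gradient L p)) + Linf / 2 * stepSize L Linf θ p ^ 2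
      = -((1 - θ) ^ 2 / (2 * Linf) * l1norm (gradient L p) ^ 2) := by
  simp only [stepSize]
  field_simp
  ring

theorem integral_comp_sub_stepSize_smul_signVec_le [IsFiniteMeasure μ] (hm : m ≤ mΩ)
    (hL : Differentiable ℝ L) (hLinf : 0 < Linf) (hsmooth : LinfSmooth L Linf)
    (hθ : θ ≤ 1) {X Y G : Ω → EuclideanSpace ℝ (Fin d)} (hX : Measurable[m] X) {R : ℝ}
    (hXR : ∀ ω, ‖X ω‖ ≤ R) (hG : Integrable G μ)
    (hunb : μ[G|m] =ᵐ[μ] fun ω => gradient L (X ω))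
    (hnoise : ∀ᵐ ω ∂μ, μ[fun ω' => l1norm (G ω' - gradient L (X ω'))|m] ω
      ≤ θ * l1norm (gradient L (X ω)))
    (hY : ∀ ω, Y ω = X ω - stepSize L Linf θ (X ω) • signVec (G ω))
    (hYint : Integrable (fun ω => L (Y ω)) μ) :
    ∫ ω, L (Y ω) ∂μ
      ≤ ∫ ω, L (X ω) ∂μ - (1 - θ) ^ 2 / (2 * Linf) * ∫ ω, l1norm (gradient L (X ω)) ^ 2 ∂μ := by
  set η := stepSize L Linf θ
  have hgrad : Continuous (gradient L) := (lipschitzWith_gradient hsmooth).continuous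
  have hη : Continuous η := continuous_stepSize hsmooth
  have hη0 : ∀ p, 0 ≤ η p := fun p =>
    div_nonneg (mul_nonneg (sub_nonneg.2 hθ) (l1norm_nonneg _)) hLinf.le
  obtain ⟨C, hC⟩ := exists_norm_comp_le hη hXR
  have hXm : AEStronglyMeasurable X μ := (hX.mono hm le_rfl).aestronglyMeasurable
  have hint {F : Type} [NormedAddCommGroup F] {f : EuclideanSpace ℝ (Fin d) → F}
      (hf : Continuous f) : Integrable (fun ω => f (X ω)) μ :=
    integrable_comp_of_norm_le hf hXm hXR
  have hdrift_cont : Continuous fun p => η p * (-(1 - θ) * l1norm (gradient L p)) :=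
    hη.mul (continuous_const.mul (continuous_l1norm.comp hgrad))
  have hquad : Integrable (fun ω => Linf / 2 * η (X ω) ^ 2) μ :=
    hint (f := fun p => Linf / 2 * η p ^ 2) (continuous_const.mul (hη.pow 2))
  set D : Ω → ℝ := fun ω => l1norm (G ω - gradient L (X ω)) - l1norm (G ω)
  have hD : Integrable D μ :=
    (integrable_l1norm_comp (hG.sub (hint hgrad))).sub (integrable_l1norm_comp hG)
  have hηD : Integrable (fun ω => η (X ω) * D ω) μ :=
    hD.bdd_mul (hη.comp_aestronglyMeasurable hXm) (ae_of_all _ hC)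
  have hLX : Integrable (fun ω => L (X ω)) μ := hint hL.continuous
  have hdescent : ∫ ω, L (Y ω) ∂μ
      ≤ ∫ ω, L (X ω) ∂μ + ∫ ω, η (X ω) * D ω ∂μ + ∫ ω, Linf / 2 * η (X ω) ^ 2 ∂μ := by
    refine (integral_mono hYint ((hLX.add hηD).add hquad) fun ω => ?_).trans_eq
      ((integral_add (hLX.add hηD) hquad).trans (congrArg (· + _) (integral_add hLX hηD)))
    rw [hY]
    exact le_sub_smul_signVec hL hLinf.le hsmooth _ _ (hη0 _)
  have hdrift : ∫ ω, η (X ω) * D ω ∂μ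
      ≤ ∫ ω, η (X ω) * (-(1 - θ) * l1norm (gradient L (X ω))) ∂μ :=
    integral_mul_le_of_condExp_le hm (hη.measurable.comp hX).stronglyMeasurable
      (fun ω => hη0 _) hC hD (hint hdrift_cont)
      (condExp_l1norm_sub_sub_l1norm_le hm hG (hint hgrad) hunb hnoise)
  have hbalance : ∫ ω, η (X ω) * (-(1 - θ) * l1norm (gradient L (X ω))) ∂μ
      + ∫ ω, Linf / 2 * η (X ω) ^ 2 ∂μ
      = -((1 - θ) ^ 2 / (2 * Linf) * ∫ ω, l1norm (gradient L (X ω)) ^ 2 ∂μ) := by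
    rw [← integral_add (hint hdrift_cont) hquad, ← integral_const_mul, ← integral_neg]
    simp only [η, stepSize_mul_add_half_sq hLinf.ne']
  linarith

end SignStep

section GenBy

variable {Ω : Type*} {mΩ : MeasurableSpace Ω} {d : ℕ} {x : ℕ → Ω → EuclideanSpace ℝ (Fin d)}

lemma genBy_le (hx : ∀ k, Measurable (x k)) (k : ℕ) : genBy x k ≤ mΩ :=
  iSup₂_le fun i _ => (hx i).comap_le

lemma measurable_genBy (k : ℕ) : Measurable[genBy x k] (x k) :=
  Measurable.of_comap_le <| le_iSup₂ (f := fun i (_ : i ∈ Finset.range (k + 1)) =>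
    MeasurableSpace.comap (x i) inferInstance) k (Finset.self_mem_range_succ k)

end GenBy

theorem stmt9_general {d : ℕ} (L : EuclideanSpace ℝ (Fin d) → ℝ) (hL : Differentiable ℝ L)
    (Linf : ℝ) (hLinf_pos : 0 < Linf)
    (hsmooth : ∀ x y, l1norm (gradient L x - gradient L y) ≤ Linf * linfnorm (x - y))
    (Lstar : ℝ)
    (μstrong : ℝ)
    (hsc : ∀ x, 2 * μstrong * (L x - Lstar) ≤ (l1norm (gradient L x)) ^ 2)
    (θ : ℝ) (hθ : θ ∈ Set.Ioo (0 : ℝ) 1)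
    {Ω : Type*} [MeasurableSpace Ω] (μ : Measure Ω) [IsProbabilityMeasure μ]
    (x : ℕ → Ω → EuclideanSpace ℝ (Fin d)) (g : ℕ → Ω → EuclideanSpace ℝ (Fin d))
    (x₀ : EuclideanSpace ℝ (Fin d)) (hx0 : ∀ ω, x 0 ω = x₀)
    (hxmeas : ∀ k, Measurable (x k))
    (hg_int : ∀ k, Integrable (g k) μ)
    (hupdate : ∀ k ω, x (k + 1) ω
      = x k ω - ((1 - θ) * l1norm (gradient L (x k ω)) / Linf) • signVec (g k ω))
    (hunbiased : ∀ k, μ[g k | genBy x k] =ᵐ[μ] fun ω => gradient L (x k ω))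
    (hnoise : ∀ k, ∀ᵐ ω ∂μ,
      (μ[fun ω' => l1norm (g k ω' - gradient L (x k ω')) | genBy x k]) ω
        ≤ θ * l1norm (gradient L (x k ω))) :
    ∀ k, (∫ ω, L (x (k + 1) ω) ∂μ) - Lstar
      ≤ (1 - (1 - θ) ^ 2 * μstrong / Linf) * ((∫ ω, L (x k ω) ∂μ) - Lstar) := by
  have hbdd : ∀ j, ∃ R, ∀ ω, ‖x j ω‖ ≤ R :=
    exists_norm_le_of_eq_sub_smul (continuous_stepSize (θ := θ) hsmooth)
      (fun j ω => (norm_le_l1norm _).trans (l1norm_signVec_le (g j ω)))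
      ⟨‖x₀‖, fun ω => (congrArg norm (hx0 ω)).le⟩ hupdate
  have hint {f : EuclideanSpace ℝ (Fin d) → ℝ} (hf : Continuous f) (j : ℕ) :
      Integrable (fun ω => f (x j ω)) μ :=
    integrable_comp_of_norm_le hf (hxmeas j).aestronglyMeasurable (hbdd j).choose_spec
  intro k
  have hdescent := integral_comp_sub_stepSize_smul_signVec_le (genBy_le hxmeas k) hL hLinf_pos
    hsmooth hθ.2.le (measurable_genBy k) (hbdd k).choose_spec (hg_int k) (hunbiased k) (hnoise k)
    (hupdate k) (hint hL.continuous (k + 1))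
  have hdominance : 2 * μstrong * (∫ ω, L (x k ω) ∂μ - Lstar)
      ≤ ∫ ω, l1norm (gradient L (x k ω)) ^ 2 ∂μ :=
    mul_integral_sub_le_integral (hint hL.continuous k)
      (hint ((continuous_l1norm.comp (lipschitzWith_gradient hsmooth).continuous).pow 2) k)
      fun ω => hsc (x k ω)
  have hc : 0 ≤ (1 - θ) ^ 2 / (2 * Linf) := by positivity
  calc ∫ ω, L (x (k + 1) ω) ∂μ - Lstar
      ≤ ∫ ω, L (x k ω) ∂μ - (1 - θ) ^ 2 / (2 * Linf) * (2 * μstrong * (∫ ω, L (x k ω) ∂μ - Lstar))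
        - Lstar := by linarith [mul_le_mul_of_nonneg_left hdominance hc]
    _ = (1 - (1 - θ) ^ 2 * μstrong / Linf) * (∫ ω, L (x k ω) ∂μ - Lstar) := by
        field_simp
        ring

/-- SignSGD with adaptive batch sizes under ℓ1 gradient dominance (strong convexity), with
`η_k = (1 − θ)·‖∇L(x_k)‖₁ / Linf`:
`E[L(x_{k+1})] − L* ≤ (1 − (1 − θ)²·μstrong/Linf) · (E[L(x_k)] − L*)` for every `k`. -/
theorem stmt9 {d : ℕ} (L : EuclideanSpace ℝ (Fin d) → ℝ) (hL : Differentiable ℝ L)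
    (Linf : ℝ) (hLinf_pos : 0 < Linf)
    (hsmooth : ∀ x y, l1norm (gradient L x - gradient L y) ≤ Linf * linfnorm (x - y))
    (Lstar : ℝ) (hinf : IsGLB (Set.range L) Lstar)
    (μstrong : ℝ) (hμstrong_pos : 0 < μstrong)
    (hsc : ∀ x, 2 * μstrong * (L x - Lstar) ≤ (l1norm (gradient L x)) ^ 2)
    (θ : ℝ) (hθ : θ ∈ Set.Ioo (0 : ℝ) 1)
    {Ω : Type*} [MeasurableSpace Ω] (μ : Measure Ω) [IsProbabilityMeasure μ]
    (x : ℕ → Ω → EuclideanSpace ℝ (Fin d)) (g : ℕ → Ω → EuclideanSpace ℝ (Fin d))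
    (x₀ : EuclideanSpace ℝ (Fin d)) (hx0 : ∀ ω, x 0 ω = x₀)
    (hxmeas : ∀ k, Measurable (x k))
    (hg_int : ∀ k, Integrable (g k) μ)
    (hupdate : ∀ k ω, x (k + 1) ω
      = x k ω - ((1 - θ) * l1norm (gradient L (x k ω)) / Linf) • signVec (g k ω))
    (hunbiased : ∀ k, μ[g k | genBy x k] =ᵐ[μ] fun ω => gradient L (x k ω))
    (hnoise : ∀ k, ∀ᵐ ω ∂μ,
      (μ[fun ω' => l1norm (g k ω' - gradient L (x k ω')) | genBy x k]) ω
        ≤ θ * l1norm (gradient L (x k ω))) :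
    ∀ k, (∫ ω, L (x (k + 1) ω) ∂μ) - Lstar
      ≤ (1 - (1 - θ) ^ 2 * μstrong / Linf) * ((∫ ω, L (x k ω) ∂μ) - Lstar) :=
  stmt9_general L hL Linf hLinf_pos hsmooth Lstar μstrong hsc θ hθ μ x g x₀ hx0 hxmeas hg_int
    hupdate hunbiased hnoise
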